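/- Let 𝓘 be the family of maximum feasible sets of A (extended with a_0 = 0), let ⊲ be the relation on 𝓘 induced by the patience sorting piles, and for I ∈ 𝓘 let M(I) be the lower set of I in the transitive closure of ⊲. If I, J ∈ 𝓘 satisfy I ⊲ J, then the unique ⊲-minimal set of M(I) equals the unique ⊲-minimal set of M(J). -/

import Mathlib

/-- One step of patience sorting: place index `i` (with value `a i`) on the
leftmost pile whose current top element is greater than `a i`, or start a
new pile at the right end if no such pile exists.  Each pile is a list of
indices with the head being the top (most recently placed) element. -/
def place (a : ℕ → ℕ) : List (List ℕ) → ℕ → List (List ℕ)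
  | [], i => [[i]]
  | p :: ps, i => if a i < a p.headI then (i :: p) :: ps else p :: place a ps i

/-- The (nonempty) piles obtained by patience sorting, processing the values
`a i` for `i ∈ idxs` in order. -/
def pilesOf (a : ℕ → ℕ) (idxs : List ℕ) : List (List ℕ) :=
  idxs.foldl (place a) []

/-- `I` is the index set of an increasing subsequence of `a`. -/
def Feasible (a : ℕ → ℕ) (I : Finset ℕ) : Prop :=
  ∀ i ∈ I, ∀ j ∈ I, i < j → a i < a j

/-- A maximum feasible set for the sequence `a₀ = 0, a₁, …, aₙ`:
a feasible subset of the index set `{0, 1, …, n}` of largest cardinality. -/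
def MaxFeasible (a : ℕ → ℕ) (n : ℕ) (I : Finset ℕ) : Prop :=
  I ⊆ Finset.range (n + 1) ∧ Feasible a I ∧
    ∀ J ⊆ Finset.range (n + 1), Feasible a J → J.card ≤ I.card

/-- `u` is placed strictly below `v` in one of the piles: some pile (a list of
indices whose head is the top) has `v` at an earlier position than `u`. -/
def Below (piles : List (List ℕ)) (u v : ℕ) : Prop :=
  ∃ p ∈ piles, ∃ k l : ℕ, k < l ∧ p[k]? = some v ∧ p[l]? = some u

/-- The relation `I ⊲ J` on maximum feasible sets: `I \ J = {u}`,
`J \ I = {v}`, and `a u` is placed strictly below `a v` in the same pile of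
the patience sorting of `a₀ = 0, a₁, …, aₙ`. -/
def PileLT (a : ℕ → ℕ) (n : ℕ) (I J : Finset ℕ) : Prop :=
  ∃ u v : ℕ, I \ J = {u} ∧ J \ I = {v} ∧
    Below (pilesOf a (List.range (n + 1))) u v

/-- One step of `⊲` within the family of maximum feasible sets. -/
def StepLT (a : ℕ → ℕ) (n : ℕ) (I J : Finset ℕ) : Prop :=
  MaxFeasible a n I ∧ MaxFeasible a n J ∧ PileLT a n I J

/-- `J ∈ M(I)`: membership in the lower set of `I` in the transitive closure
of `⊲` within the family of maximum feasible sets; equivalently, `M(I)` is the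
smallest family containing `I` and closed under taking `⊲`-smaller sets. -/
def InLowerSet (a : ℕ → ℕ) (n : ℕ) (J I : Finset ℕ) : Prop :=
  Relation.ReflTransGen (StepLT a n) J I

/-- `I` is `⊲`-minimal among maximum feasible sets. -/
def MinimalLT (a : ℕ → ℕ) (n : ℕ) (I : Finset ℕ) : Prop :=
  ∀ J : Finset ℕ, MaxFeasible a n J → ¬ PileLT a n J I

/-!
Viewed downwards, `⊲` is locally confluent in the strong form of `Relation.church_rosser`.
Two exchanges `Y - v₁ + u₁ ⊲ Y` and `Y - v₂ + u₂ ⊲ Y` with the same top `v₁ = v₂` put `u₁, u₂`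
in the pile of `v₁`, so one of the two sets is `⊲` the other. With distinct tops, `u₁ ≠ u₂` (else
`v₁, v₂` would be comparable in one pile, against feasibility of `Y`), and performing both
exchanges gives a common `⊲`-predecessor: in a pile, the lower element has the smaller index and
the larger value, so `u₁ < u₂` yields `a u₁ < a v₂ < a u₂`. Hence any two members of `M(J)` have
a common lower bound, which equals each of them when they are `⊲`-minimal; and `M(I) ⊆ M(J)`.
-/

def StacksOn (a : ℕ → ℕ) (x y : ℕ) : Prop := y < x ∧ a x < a y

theorem flatten_place_perm (a : ℕ → ℕ) (i : ℕ) :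
    ∀ piles : List (List ℕ), (place a piles i).flatten.Perm (i :: piles.flatten)
  | [] => .refl _
  | p :: ps => by
    unfold place
    split_ifs
    · exact .refl _
    · exact ((flatten_place_perm a i ps).append_left p).trans List.perm_middle

theorem stacksOn_of_lt_headI {a : ℕ → ℕ} {i : ℕ} {p : List ℕ} (hp : p.Pairwise (StacksOn a))
    (hlt : ∀ z ∈ p, z < i) (hi : a i < a p.headI) : ∀ z ∈ p, StacksOn a i z := by
  cases p with
  | nil => simp
  | cons y t =>
    intro z hz
    refine ⟨hlt z hz, ?_⟩
    rcases List.mem_cons.1 hz with rfl | hz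
    · exact hi
    · exact hi.trans (List.rel_of_pairwise_cons hp hz).2

theorem pairwise_place {a : ℕ → ℕ} {i : ℕ} :
    ∀ {piles : List (List ℕ)}, (∀ x ∈ piles.flatten, x < i) →
      (∀ p ∈ piles, p.Pairwise (StacksOn a)) → ∀ p ∈ place a piles i, p.Pairwise (StacksOn a)
  | [], _, _ => by simp [place]
  | p :: ps, hlt, hpw => by
    rw [List.forall_mem_cons] at hpw
    simp only [List.flatten_cons, List.mem_append] at hlt
    unfold place
    split_ifs with hi
    · exact List.forall_mem_cons.2
        ⟨List.pairwise_cons.2 ⟨stacksOn_of_lt_headI hpw.1 (fun z hz => hlt z (.inl hz)) hi, hpw.1⟩,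
          hpw.2⟩
    · exact List.forall_mem_cons.2 ⟨hpw.1, pairwise_place (fun x hx => hlt x (.inr hx)) hpw.2⟩

theorem pilesOf_range_succ (a : ℕ → ℕ) (m : ℕ) :
    pilesOf a (List.range (m + 1)) = place a (pilesOf a (List.range m)) m := by
  simp [pilesOf, List.range_succ, List.foldl_append]

theorem flatten_pilesOf_range_perm (a : ℕ → ℕ) :
    ∀ m, (pilesOf a (List.range m)).flatten.Perm (List.range m)
  | 0 => .refl _
  | m + 1 => by
    rw [pilesOf_range_succ, List.range_succ]
    exact (flatten_place_perm a m _).trans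
      (((flatten_pilesOf_range_perm a m).cons m).trans (List.perm_append_singleton m _).symm)

theorem pairwise_pilesOf_range (a : ℕ → ℕ) :
    ∀ m, ∀ p ∈ pilesOf a (List.range m), p.Pairwise (StacksOn a)
  | 0 => by simp [pilesOf]
  | m + 1 => by
    rw [pilesOf_range_succ]
    refine pairwise_place (fun x hx => ?_) (pairwise_pilesOf_range a m)
    simpa using (flatten_pilesOf_range_perm a m).subset hx

theorem nodup_flatten_pilesOf_range (a : ℕ → ℕ) (m : ℕ) :
    (pilesOf a (List.range m)).flatten.Nodup :=
  (flatten_pilesOf_range_perm a m).nodup_iff.2 List.nodup_range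

section Below

variable {piles : List (List ℕ)}

theorem Below.exists_mem {u v : ℕ} (h : Below piles u v) : ∃ p ∈ piles, u ∈ p ∧ v ∈ p := by
  obtain ⟨p, hp, _, _, _, hv, hu⟩ := h
  exact ⟨p, hp, List.mem_of_getElem? hu, List.mem_of_getElem? hv⟩

theorem Below.stacksOn {a : ℕ → ℕ} (hpw : ∀ p ∈ piles, p.Pairwise (StacksOn a)) {u v : ℕ}
    (h : Below piles u v) : StacksOn a v u := by
  obtain ⟨p, hp, k, l, hkl, hv, hu⟩ := h
  obtain ⟨hk, rfl⟩ := List.getElem?_eq_some_iff.1 hv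
  obtain ⟨hl, rfl⟩ := List.getElem?_eq_some_iff.1 hu
  exact List.pairwise_iff_getElem.1 (hpw p hp) k l hk hl hkl

theorem below_or_below_of_mem {p : List ℕ} (hp : p ∈ piles) {x y : ℕ} (hx : x ∈ p) (hy : y ∈ p)
    (hxy : x ≠ y) : Below piles x y ∨ Below piles y x := by
  obtain ⟨k, hk⟩ := List.mem_iff_getElem?.1 hx
  obtain ⟨l, hl⟩ := List.mem_iff_getElem?.1 hy
  rcases lt_trichotomy k l with hkl | rfl | hlk
  · exact .inr ⟨p, hp, k, l, hkl, hk, hl⟩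
  · exact absurd (Option.some_injective _ (hk.symm.trans hl)) hxy
  · exact .inl ⟨p, hp, l, k, hlk, hl, hk⟩

theorem eq_of_mem_of_mem_of_nodup_flatten (hnd : piles.flatten.Nodup) {p q : List ℕ}
    (hp : p ∈ piles) (hq : q ∈ piles) {x : ℕ} (hxp : x ∈ p) (hxq : x ∈ q) : p = q := by
  have : Std.Symm (α := List ℕ) List.Disjoint := ⟨fun _ _ => List.Disjoint.symm⟩
  by_contra hpq
  exact (List.nodup_flatten.1 hnd).2.forall hp hq hpq hxp hxq

theorem Below.below_or_below_of_same_upper {u₁ u₂ v : ℕ} (h₁ : Below piles u₁ v)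
    (hnd : piles.flatten.Nodup) (h₂ : Below piles u₂ v) (hne : u₁ ≠ u₂) :
    Below piles u₁ u₂ ∨ Below piles u₂ u₁ := by
  obtain ⟨p, hp, hu₁, hv⟩ := h₁.exists_mem
  obtain ⟨q, hq, hu₂, hv'⟩ := h₂.exists_mem
  obtain rfl := eq_of_mem_of_mem_of_nodup_flatten hnd hp hq hv hv'
  exact below_or_below_of_mem hp hu₁ hu₂ hne

theorem Below.below_or_below_of_same_lower {u v₁ v₂ : ℕ} (h₁ : Below piles u v₁)
    (hnd : piles.flatten.Nodup) (h₂ : Below piles u v₂) (hne : v₁ ≠ v₂) :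
    Below piles v₁ v₂ ∨ Below piles v₂ v₁ := by
  obtain ⟨p, hp, hu, hv₁⟩ := h₁.exists_mem
  obtain ⟨q, hq, hu', hv₂⟩ := h₂.exists_mem
  obtain rfl := eq_of_mem_of_mem_of_nodup_flatten hnd hp hq hu hu'
  exact below_or_below_of_mem hp hv₁ hv₂ hne

theorem Feasible.not_below {a : ℕ → ℕ} (hpw : ∀ p ∈ piles, p.Pairwise (StacksOn a))
    {I : Finset ℕ} (hI : Feasible a I) {u v : ℕ} (hu : u ∈ I) (hv : v ∈ I) :
    ¬ Below piles u v := fun h =>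
  have hvu := h.stacksOn hpw
  (hI u hu v hv hvu.1).asymm hvu.2

end Below

theorem Finset.sdiff_eq_singleton_and_sdiff_eq_singleton_iff {α : Type*} [DecidableEq α]
    {s t : Finset α} {u v : α} :
    s \ t = {u} ∧ t \ s = {v} ↔ u ∉ t ∧ v ∈ t ∧ s = insert u (t.erase v) := by
  simp only [Finset.ext_iff, Finset.mem_sdiff, Finset.mem_singleton, Finset.mem_insert,
    Finset.mem_erase]
  grind

theorem pileLT_iff {a : ℕ → ℕ} {n : ℕ} {I J : Finset ℕ} :
    PileLT a n I J ↔ ∃ u v, u ∉ J ∧ v ∈ J ∧ I = insert u (J.erase v) ∧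
      Below (pilesOf a (List.range (n + 1))) u v := by
  refine exists₂_congr fun u v => ?_
  rw [← and_assoc, Finset.sdiff_eq_singleton_and_sdiff_eq_singleton_iff, and_assoc, and_assoc]

theorem MaxFeasible.of_card_eq {a : ℕ → ℕ} {n : ℕ} {I J : Finset ℕ} (hI : MaxFeasible a n I)
    (hJn : J ⊆ Finset.range (n + 1)) (hJ : Feasible a J) (hcard : J.card = I.card) :
    MaxFeasible a n J :=
  ⟨hJn, hJ, fun K hKn hK => hcard ▸ hI.2.2 K hKn hK⟩

section Diamond

variable {a : ℕ → ℕ} {n : ℕ}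

theorem stepLT_insert_erase {J : Finset ℕ} {u v : ℕ} (hI : MaxFeasible a n (insert u (J.erase v)))
    (hJ : MaxFeasible a n J) (hu : u ∉ J) (hv : v ∈ J)
    (h : Below (pilesOf a (List.range (n + 1))) u v) : StepLT a n (insert u (J.erase v)) J :=
  ⟨hI, hJ, pileLT_iff.2 ⟨u, v, hu, hv, rfl, h⟩⟩

theorem stepLT_of_below_of_same_upper {Y : Finset ℕ} {u₁ u₂ v : ℕ}
    (hX₁ : MaxFeasible a n (insert u₁ (Y.erase v))) (hX₂ : MaxFeasible a n (insert u₂ (Y.erase v)))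
    (hu₁ : u₁ ∉ Y) (hu₂ : u₂ ∉ Y) (h : Below (pilesOf a (List.range (n + 1))) u₂ u₁) :
    StepLT a n (insert u₂ (Y.erase v)) (insert u₁ (Y.erase v)) := by
  have hne : u₂ ≠ u₁ := (h.stacksOn (pairwise_pilesOf_range a _)).1.ne
  have hX₂' : insert u₂ (Y.erase v) = insert u₂ ((insert u₁ (Y.erase v)).erase u₁) := by
    rw [Finset.erase_insert fun h => hu₁ (Finset.mem_of_mem_erase h)]
  rw [hX₂'] at hX₂ ⊢
  refine stepLT_insert_erase hX₂ hX₁ ?_ (Finset.mem_insert_self _ _) h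
  simp only [Finset.mem_insert, Finset.mem_erase, not_or, not_and]
  exact ⟨hne, fun _ => hu₂⟩

theorem exists_stepLT_stepLT_of_ne {Y : Finset ℕ} {u₁ u₂ v₁ v₂ : ℕ} (hY : MaxFeasible a n Y)
    (hX₁ : MaxFeasible a n (insert u₁ (Y.erase v₁)))
    (hX₂ : MaxFeasible a n (insert u₂ (Y.erase v₂))) (hu₁ : u₁ ∉ Y) (hu₂ : u₂ ∉ Y) (hv₁ : v₁ ∈ Y) (hv₂ : v₂ ∈ Y) (hv : v₁ ≠ v₂)
    (hb₁ : Below (pilesOf a (List.range (n + 1))) u₁ v₁)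
    (hb₂ : Below (pilesOf a (List.range (n + 1))) u₂ v₂) :
    ∃ Z, StepLT a n Z (insert u₁ (Y.erase v₁)) ∧ StepLT a n Z (insert u₂ (Y.erase v₂)) := by
  have hpw := pairwise_pilesOf_range a (n + 1)
  have hu : u₁ ≠ u₂ := by
    rintro rfl
    rcases hb₁.below_or_below_of_same_lower (nodup_flatten_pilesOf_range a _) hb₂ hv with h | h
    · exact hY.2.1.not_below hpw hv₁ hv₂ h
    · exact hY.2.1.not_below hpw hv₂ hv₁ h
  have hs₁ := hb₁.stacksOn hpw
  have hs₂ := hb₂.stacksOn hpw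
  set X₁ := insert u₁ (Y.erase v₁)
  set X₂ := insert u₂ (Y.erase v₂)
  have hu₂X₁ : u₂ ∉ X₁ := by grind
  have hv₂X₁ : v₂ ∈ X₁ := by grind
  have hu₁X₂ : u₁ ∉ X₂ := by grind
  have hv₁X₂ : v₁ ∈ X₂ := by grind
  set Z := insert u₂ (X₁.erase v₂)
  have hZ₂ : Z = insert u₁ (X₂.erase v₁) := by grind
  have hZ : Feasible a Z := by
    intro i hi j hj hij
    by_cases h₁ : i ∈ X₁ ∧ j ∈ X₁
    · exact hX₁.2.1 i h₁.1 j h₁.2 hij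
    by_cases h₂ : i ∈ X₂ ∧ j ∈ X₂
    · exact hX₂.2.1 i h₂.1 j h₂.2 hij
    -- only the pair `{u₁, u₂}` lies in neither `X₁` nor `X₂`; compare it through `v₁` or `v₂`
    obtain ⟨rfl, rfl⟩ | ⟨rfl, rfl⟩ : (i = u₁ ∧ j = u₂) ∨ (i = u₂ ∧ j = u₁) := by grind
    · exact (hX₁.2.1 _ (Finset.mem_insert_self _ _) _ hv₂X₁ (hij.trans hs₂.1)).trans hs₂.2
    · exact (hX₂.2.1 _ (Finset.mem_insert_self _ _) _ hv₁X₂ (hij.trans hs₁.1)).trans hs₁.2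
  have hZcard : Z.card = X₁.card := by
    rw [Finset.card_insert_of_notMem fun h => hu₂X₁ (Finset.mem_of_mem_erase h),
      Finset.card_erase_add_one hv₂X₁]
  have hZn : Z ⊆ Finset.range (n + 1) :=
    Finset.insert_subset (hX₂.1 (Finset.mem_insert_self _ _))
      ((Finset.erase_subset _ _).trans hX₁.1)
  have hZmax := hX₁.of_card_eq hZn hZ hZcard
  refine ⟨Z, stepLT_insert_erase hZmax hX₁ hu₂X₁ hv₂X₁ hb₂, ?_⟩
  rw [hZ₂] at hZmax ⊢
  exact stepLT_insert_erase hZmax hX₂ hu₁X₂ hv₁X₂ hb₁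

theorem StepLT.exists_reflGen_flip {X₁ X₂ Y : Finset ℕ} (h₁ : StepLT a n X₁ Y)
    (h₂ : StepLT a n X₂ Y) :
    ∃ Z, Relation.ReflGen (flip (StepLT a n)) X₁ Z ∧ Relation.ReflGen (flip (StepLT a n)) X₂ Z := by
  obtain ⟨hX₁, hY, hlt₁⟩ := h₁
  obtain ⟨hX₂, -, hlt₂⟩ := h₂
  obtain ⟨u₁, v₁, hu₁, hv₁, rfl, hb₁⟩ := pileLT_iff.1 hlt₁
  obtain ⟨u₂, v₂, hu₂, hv₂, rfl, hb₂⟩ := pileLT_iff.1 hlt₂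
  by_cases hv : v₁ = v₂
  · subst hv
    by_cases hu : u₁ = u₂
    · subst hu
      exact ⟨_, .refl, .refl⟩
    rcases hb₁.below_or_below_of_same_upper (nodup_flatten_pilesOf_range a _) hb₂ hu with h | h
    · exact ⟨_, .refl, .single (stepLT_of_below_of_same_upper hX₂ hX₁ hu₂ hu₁ h)⟩
    · exact ⟨_, .single (stepLT_of_below_of_same_upper hX₁ hX₂ hu₁ hu₂ h), .refl⟩
  · obtain ⟨Z, hZ₁, hZ₂⟩ :=
      exists_stepLT_stepLT_of_ne hY hX₁ hX₂ hu₁ hu₂ hv₁ hv₂ hv hb₁ hb₂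
    exact ⟨Z, .single hZ₁, .single hZ₂⟩

theorem InLowerSet.exists_common {K K' Y : Finset ℕ} (h : InLowerSet a n K Y)
    (h' : InLowerSet a n K' Y) : ∃ Z, InLowerSet a n Z K ∧ InLowerSet a n Z K' := by
  obtain ⟨Z, hZ, hZ'⟩ := Relation.church_rosser (r := flip (StepLT a n))
    (fun _ _ _ h₁ h₂ => (StepLT.exists_reflGen_flip h₁ h₂).imp fun _ hZ =>
      ⟨hZ.1, hZ.2.to_reflTransGen⟩)
    (Relation.reflTransGen_swap.2 h) (Relation.reflTransGen_swap.2 h')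
  exact ⟨Z, Relation.reflTransGen_swap.1 hZ, Relation.reflTransGen_swap.1 hZ'⟩

theorem MinimalLT.eq_of_inLowerSet {K Z : Finset ℕ} (hK : MinimalLT a n K)
    (h : InLowerSet a n Z K) : Z = K := by
  rcases h.cases_tail with rfl | ⟨c, -, hc⟩
  · rfl
  · exact absurd hc.2.2 (hK c hc.1)

end Diamond

theorem stmt9_general (n : ℕ) (a : ℕ → ℕ)
    (I J : Finset ℕ) (hI : MaxFeasible a n I) (hJ : MaxFeasible a n J)
    (hIJ : PileLT a n I J)
    (K K' : Finset ℕ)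
    (hK : MaxFeasible a n K ∧ InLowerSet a n K I ∧ MinimalLT a n K)
    (hK' : MaxFeasible a n K' ∧ InLowerSet a n K' J ∧ MinimalLT a n K') :
    K = K' := by
  have hKJ : InLowerSet a n K J := hK.2.1.tail ⟨hI, hJ, hIJ⟩
  obtain ⟨Z, hZK, hZK'⟩ := hKJ.exists_common hK'.2.1
  rw [← hK.2.2.eq_of_inLowerSet hZK, hK'.2.2.eq_of_inLowerSet hZK']

/-- If `I` and `J` are maximum feasible sets with `I ⊲ J`, then the
`⊲`-minimal sets of `M(I)` and `M(J)` are identical: any `⊲`-minimal member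
of `M(I)` equals any `⊲`-minimal member of `M(J)`. -/
theorem stmt9 (n : ℕ) (a : ℕ → ℕ) (hn : 0 < n) (h0 : a 0 = 0)
    (hmem : ∀ i ∈ Finset.Icc 1 n, a i ∈ Finset.Icc 1 n)
    (hinj : ∀ i ∈ Finset.Icc 1 n, ∀ j ∈ Finset.Icc 1 n, a i = a j → i = j)
    (I J : Finset ℕ) (hI : MaxFeasible a n I) (hJ : MaxFeasible a n J)
    (hIJ : PileLT a n I J)
    (K K' : Finset ℕ)
    (hK : MaxFeasible a n K ∧ InLowerSet a n K I ∧ MinimalLT a n K)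
    (hK' : MaxFeasible a n K' ∧ InLowerSet a n K' J ∧ MinimalLT a n K') :
    K = K' :=
  stmt9_general n a I J hI hJ hIJ K K' hK hK'
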